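/- Let n≥2 be an integer and g a nonnegative integer with gcd(n,g)=1. Then det C_{n,g}(L) = det(Q_g) · [ (1 − L_{n+1})^{n−1} + (L_n − 2)^{n−2} · Σ_{i=1}^{n−1} ( L_{i+2} − 3L_{i+1} ) · ((1 − L_{n+1})/(L_n − 2))^{i−1} ]. -/

import Mathlib

/-
Write `n = m + 2`, `x = L₁ - L_{n+1}` and `z = L_n - L₀`. Since `C_{n,g} = Q_g C_{n,1}`, it suffices
to treat the ordinary circulant, whose row `R_i` is `(c_{j-i})_j` with `c_d = L_{d+1}` and indices
mod `n`. The first row satisfies the Lucas recurrence except where it wraps around, so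
`R_i - R_{i+1} - R_{i+2} = x e_i - z e_{i+1}` for `i < m`; replacing `R_m` by `L₁ R_m - L₂ R_{m+1}`
also clears the last column above the corner entry `L₁`. What is left is a bidiagonal matrix with
an arbitrary last row `u`, of determinant `∑ u_j x^j z^{m-j}`. For Lucas numbers
`u_j = L_{j+3} - 3 L_{j+2}` except in the last entry, which is off by `x`: this is the term
`x^{n-1}`.
-/

/-- The `g`-circulant matrix of size `n` with first row `(a 0, a 1, …, a (n-1))`:
its `(i,j)` entry (0-indexed) equals `a ((j - i*g) mod n)`. -/
def gCirc {α : Type*} (n g : ℕ) (a : ℕ → α) : Matrix (Fin n) (Fin n) α :=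
  Matrix.of fun i j => a ((j.val + (n - (i.val * g) % n)) % n)

/-- `Q_g`: the `g`-circulant matrix with first row `(1,0,…,0)`. -/
def Qg (n g : ℕ) : Matrix (Fin n) (Fin n) ℝ :=
  gCirc n g (fun m => if m = 0 then (1 : ℝ) else 0)

open Matrix
open scoped Fin.NatCast

theorem gCirc_apply {α : Type*} {n : ℕ} [NeZero n] (g : ℕ) (a : ℕ → α) (i j : Fin n) :
    gCirc n g a i j = a ((j - i * (g : Fin n) : Fin n) : ℕ) := by
  rw [gCirc, of_apply, Fin.val_sub, Fin.val_mul, Fin.val_natCast, Nat.mul_mod_mod, add_comm]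

theorem Qg_apply {n : ℕ} [NeZero n] (g : ℕ) (i k : Fin n) :
    Qg n g i k = if k = i * (g : Fin n) then 1 else 0 := by
  simp only [Qg, gCirc_apply, Fin.val_eq_zero_iff, sub_eq_zero]

theorem gCirc_one {α : Type*} {n : ℕ} [NeZero n] (a : ℕ → α) :
    gCirc n 1 a = of fun i j : Fin n => a ((j - i : Fin n) : ℕ) := by
  ext i j
  simp [gCirc_apply]

theorem gCirc_eq_Qg_mul {n : ℕ} [NeZero n] (g : ℕ) (a : ℕ → ℝ) :
    gCirc n g a = Qg n g * gCirc n 1 a := by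
  ext i j
  simp only [mul_apply, Qg_apply, ite_mul, one_mul, zero_mul, Finset.sum_ite_eq',
    Finset.mem_univ, if_true, gCirc_apply, Nat.cast_one, mul_one]

def bidiagLastRow {R : Type*} [Ring R] (x z : R) {m : ℕ} (u : Fin (m + 1) → R) :
    Matrix (Fin (m + 1)) (Fin (m + 1)) R :=
  of fun i j => if i = Fin.last m then u j
    else if (j : ℕ) = i then x else if (j : ℕ) = i + 1 then -z else 0

theorem det_bidiagLastRow {R : Type*} [CommRing R] (x z : R) :
    ∀ {m : ℕ} (u : Fin (m + 1) → R),
      (bidiagLastRow x z u).det = ∑ j, u j * x ^ (j : ℕ) * z ^ (m - j)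
  | 0, u => by simp [bidiagLastRow]
  | m + 1, u => by
    have hsucc : (bidiagLastRow x z u).submatrix Fin.succ Fin.succ =
        bidiagLastRow x z (u ∘ Fin.succ) := by
      ext i j
      simp [bidiagLastRow, ← Fin.succ_last, Fin.succ_inj]
    have hcast : ((bidiagLastRow x z u).submatrix Fin.castSucc Fin.succ).det = (-z) ^ (m + 1) := by
      rw [det_of_isLowerTriangular]
      · simp [bidiagLastRow, Fin.castSucc_ne_last]
      · intro i j hij
        have : (i : ℕ) < j := hij
        simp only [bidiagLastRow, submatrix_apply, of_apply, Fin.castSucc_ne_last, if_false,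
          Fin.val_castSucc, Fin.val_succ]
        split_ifs <;> first | rfl | omega
    have hsign : (-1 : R) ^ (m + 1) * (-z) ^ (m + 1) = z ^ (m + 1) := by
      rw [← mul_pow, neg_one_mul, neg_neg]
    have h₀₀ : bidiagLastRow x z u 0 0 = x := by simp [bidiagLastRow]
    have hlast₀ : bidiagLastRow x z u (Fin.last (m + 1)) 0 = u 0 := by simp [bidiagLastRow]
    rw [det_succ_column_zero, Fin.sum_univ_succ, Finset.sum_eq_single (Fin.last m)]
    · rw [Fin.succAbove_zero, hsucc, det_bidiagLastRow, Fin.succ_last, Fin.succAbove_last, hcast,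
        h₀₀, hlast₀, Fin.sum_univ_succ (n := m + 1), Finset.mul_sum, add_comm]
      simp only [Fin.val_zero, Fin.val_last, Fin.val_succ, Function.comp_apply, pow_zero, one_mul,
        mul_one, tsub_zero, Nat.add_sub_add_right, Nat.succ_eq_add_one]
      congr 1
      · linear_combination u 0 * hsign
      · exact Finset.sum_congr rfl fun j _ => by ring
    · intro i _ hi
      simp [bidiagLastRow, hi]
    · simp

theorem det_eq_mul_det_submatrix_castSucc {R : Type*} [CommRing R] {n : ℕ}
    (A : Matrix (Fin (n + 1)) (Fin (n + 1)) R) (h : ∀ i : Fin n, A i.castSucc (Fin.last n) = 0) :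
    A.det = A (Fin.last n) (Fin.last n) * (A.submatrix Fin.castSucc Fin.castSucc).det := by
  rw [det_succ_column A (Fin.last n), Fin.sum_univ_castSucc]
  simp [h, Fin.succAbove_last, ← two_mul, pow_mul]

section Circulant

variable {R : Type*} [CommRing R] {m : ℕ}

def circRowOp (c₀ c₁ : R) (m : ℕ) : Matrix (Fin (m + 2)) (Fin (m + 2)) R :=
  of fun i k =>
    if (i : ℕ) < m then
      (if k = i then 1 else 0) - (if k = i + 1 then 1 else 0) - (if k = i + 1 + 1 then 1 else 0)
    else if (i : ℕ) = m then (if k = i then c₀ else 0) - (if k = i + 1 then c₁ else 0)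
    else if k = i then 1 else 0

theorem det_circRowOp (c₀ c₁ : R) (m : ℕ) : (circRowOp c₀ c₁ m).det = c₀ := by
  rw [det_of_isUpperTriangular]
  · have hdiag : ∀ i, circRowOp c₀ c₁ m i i =
        if i = (Fin.last m).castSucc then c₀ else 1 := by
      intro i
      simp only [circRowOp, of_apply, Fin.ext_iff, Fin.val_add_one, Fin.val_last, Fin.val_castSucc]
      split_ifs <;> first | omega | simp
    simp [hdiag]
  · intro i k h
    have hki : (k : ℕ) < i := h
    simp only [circRowOp, of_apply, Fin.ext_iff, Fin.val_add_one, Fin.val_last]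
    split_ifs <;> first | omega | simp

theorem circRowOp_mul_apply (c : Fin (m + 2) → R) (i j : Fin (m + 2)) :
    (circRowOp (c 0) (c 1) m * of fun i j => c (j - i)) i j =
      if (i : ℕ) < m then c (j - i) - c (j - (i + 1)) - c (j - (i + 1 + 1))
      else if (i : ℕ) = m then c 0 * c (j - i) - c 1 * c (j - (i + 1))
      else c (j - i) := by
  simp only [circRowOp, mul_apply, of_apply]
  split_ifs <;> simp [sub_mul, ite_mul, Finset.sum_sub_distrib]

theorem det_circulant_of_cyclic_rec [IsDomain R] (c : Fin (m + 2) → R) (x z : R)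
    (hc : ∀ e, c e - c (e - 1) - c (e - 1 - 1) =
      (if e = 0 then x else 0) - (if e = 1 then z else 0))
    (h₀ : c 0 ≠ 0) :
    (of fun i j : Fin (m + 2) => c (j - i)).det =
      ∑ j : Fin (m + 1), (c 0 * c (j.castSucc + 1 + 1) - c 1 * c (j.castSucc + 1)) *
        x ^ (j : ℕ) * z ^ (m - j) := by
  set M := circRowOp (c 0) (c 1) m * of fun i j : Fin (m + 2) => c (j - i) with hMdef
  have hM : ∀ i j, M i j =
      if (i : ℕ) < m then (if j = i then x else 0) - (if j = i + 1 then z else 0)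
      else if (i : ℕ) = m then c 0 * c (j + 1 + 1) - c 1 * c (j + 1)
      else c (j + 1) := by
    intro i j
    rw [hMdef, circRowOp_mul_apply]
    rcases lt_trichotomy (i : ℕ) m with hi | hi | hi
    · simp only [if_pos hi, sub_add_eq_sub_sub, hc, sub_eq_zero (a := j),
        sub_eq_iff_eq_add' (a := j)]
    · have h2 : i + 1 + 1 = 0 := by
        simp only [Fin.ext_iff, Fin.val_add_one, Fin.val_last, Fin.val_zero]
        split_ifs <;> omega
      have h2' : j - i = j + 1 + 1 := by rw [← add_zero (j - i), ← h2]; abel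
      have h1' : j - (i + 1) = j + 1 := by rw [← add_zero (j - (i + 1)), ← h2]; abel
      simp only [hi, lt_irrefl, if_false, if_true, h2', h1']
    · have h1 : i + 1 = 0 := by
        simp only [Fin.ext_iff, Fin.val_add_one, Fin.val_last, Fin.val_zero]
        split_ifs <;> omega
      have h1' : j - i = j + 1 := by rw [← add_zero (j - i), ← h1]; abel
      simp only [hi.ne', hi.not_gt, if_false, h1']
  have hlast : ∀ i : Fin (m + 1), M i.castSucc (Fin.last (m + 1)) = 0 := by
    intro i
    rw [hM, Fin.last_add_one, zero_add]
    simp only [Fin.ext_iff, Fin.val_add_one, Fin.val_last, Fin.val_castSucc]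
    split_ifs <;> first | omega | ring
  have hblock : M.submatrix Fin.castSucc Fin.castSucc =
      bidiagLastRow x z fun j => c 0 * c (j.castSucc + 1 + 1) - c 1 * c (j.castSucc + 1) := by
    ext i j
    simp only [submatrix_apply, hM, bidiagLastRow, of_apply, Fin.ext_iff, Fin.val_add_one,
      Fin.val_last, Fin.val_castSucc]
    split_ifs <;> first | omega | simp
  have hdet := det_eq_mul_det_submatrix_castSucc M hlast
  have hcorner : M (Fin.last (m + 1)) (Fin.last (m + 1)) = c 0 := by
    simp [hM, Fin.last_add_one]
  rw [hblock, det_bidiagLastRow, hcorner, hMdef, det_mul, det_circRowOp] at hdet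
  exact mul_left_cancel₀ h₀ hdet

end Circulant

theorem fib_rec_sub_sub_cyclic {R : Type*} [CommRing R] (a : ℕ → R)
    (ha : ∀ k, a (k + 2) = a (k + 1) + a k) {m : ℕ} (e : Fin (m + 2)) :
    a (e + 1) - a ((e - 1 : Fin (m + 2)) + 1) - a ((e - 1 - 1 : Fin (m + 2)) + 1) =
      (if e = 0 then a 1 - a (m + 3) else 0) - (if e = 1 then a (m + 2) - a 0 else 0) := by
  simp only [Fin.coe_sub_one, Fin.ext_iff, Fin.val_zero, Fin.val_one]
  obtain ⟨k, hk⟩ : ∃ k, (e : ℕ) = k := ⟨_, rfl⟩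
  rcases k with _ | _ | k <;>
    simp only [hk, zero_add, zero_ne_one, Nat.add_eq_zero_iff, one_ne_zero, and_false, and_self,
      ↓reduceIte, add_tsub_cancel_right, tsub_self, Nat.add_eq_right, Nat.reduceAdd]
  · linear_combination ha (m + 1)
  · linear_combination ha 0
  · linear_combination ha (k + 1)

theorem det_circulant_of_fib_rec {R : Type*} [CommRing R] [IsDomain R] (a : ℕ → R)
    (ha : ∀ k, a (k + 2) = a (k + 1) + a k) (h₁ : a 1 ≠ 0) (m : ℕ) :
    (of fun i j : Fin (m + 2) => a ((j - i : Fin (m + 2)) + 1)).det =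
      a 1 * (a 1 - a (m + 3)) ^ (m + 1) +
        ∑ j ∈ Finset.range (m + 1), (a 1 * a (j + 3) - a 2 * a (j + 2)) *
          (a 1 - a (m + 3)) ^ j * (a (m + 2) - a 0) ^ (m - j) := by
  rw [det_circulant_of_cyclic_rec (fun e => a (e + 1)) _ _ (fib_rec_sub_sub_cyclic a ha) h₁,
    Fin.sum_univ_castSucc, Finset.sum_range_succ, ← Fin.sum_univ_eq_sum_range]
  simp only [Fin.coe_ofNat_eq_mod, Nat.zero_mod, Nat.one_mod, zero_add, Fin.coeSucc_eq_succ,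
    Fin.val_add_one, Fin.succ_eq_last_succ, Fin.castSucc_ne_last, ↓reduceIte, Fin.val_succ,
    Fin.val_castSucc, add_assoc, Nat.reduceAdd, Fin.succ_last, Fin.last_add_one, Fin.val_last,
    tsub_self, pow_zero, mul_one]
  ring

theorem lucas_three_le (L : ℕ → ℝ) (hL0 : L 0 = 2) (hL1 : L 1 = 1)
    (hrec : ∀ m : ℕ, L (m + 2) = L (m + 1) + L m) (k : ℕ) : 3 ≤ L (k + 2) := by
  have h : ∀ k, 1 ≤ L (k + 1) ∧ 3 ≤ L (k + 2) := by
    intro k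
    induction k with
    | zero => constructor <;> linarith [hrec 0]
    | succ k ih => constructor <;> linarith [hrec (k + 1)]
  exact (h k).2

theorem mul_sum_Icc_div_pow {K : Type*} [Field K] (f : ℕ → K) {x z : K} (hz : z ≠ 0)
    (m : ℕ) :
    z ^ m * ∑ i ∈ Finset.Icc 1 (m + 1), f i * (x / z) ^ (i - 1) =
      ∑ j ∈ Finset.range (m + 1), f (j + 1) * x ^ j * z ^ (m - j) := by
  rw [← Finset.Ico_add_one_right_eq_Icc, Finset.sum_Ico_eq_sum_range, Nat.add_sub_cancel,
    Finset.mul_sum]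
  refine Finset.sum_congr rfl fun j hj => ?_
  rw [add_comm 1 j, Nat.add_sub_cancel, div_pow,
    pow_sub₀ _ hz (Nat.lt_succ_iff.mp (Finset.mem_range.mp hj))]
  ring

theorem det_gCirc_lucas_general
    (L : ℕ → ℝ) (hL0 : L 0 = 2) (hL1 : L 1 = 1)
    (hrec : ∀ m : ℕ, L (m + 2) = L (m + 1) + L m)
    (n r : ℕ) (hn : 2 ≤ n) :
    (gCirc n r (fun m => L (m + 1))).det =
      (Qg n r).det *
        ((1 - L (n + 1)) ^ (n - 1) +
          (L n - 2) ^ (n - 2) *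
            ∑ i ∈ Finset.Icc 1 (n - 1),
              (L (i + 2) - 3 * L (i + 1)) *
                ((1 - L (n + 1)) / (L n - 2)) ^ (i - 1)) := by
  obtain ⟨m, rfl⟩ : ∃ m, n = m + 2 := ⟨n - 2, by omega⟩
  have hL2 : L 2 = 3 := by rw [hrec 0, hL0, hL1]; norm_num
  have hz : L (m + 2) - 2 ≠ 0 := by linarith [lucas_three_le L hL0 hL1 hrec m]
  rw [gCirc_eq_Qg_mul, det_mul, gCirc_one, det_circulant_of_fib_rec L hrec (by norm_num [hL1]),
    show m + 2 - 1 = m + 1 by omega, show m + 2 - 2 = m by omega, mul_sum_Icc_div_pow _ hz,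
    hL0, hL1, hL2]
  simp only [one_mul, add_assoc, Nat.reduceAdd]

/-- Determinant of the g-circulant matrix of Lucas numbers. -/
theorem det_gCirc_lucas
    (L : ℕ → ℝ) (hL0 : L 0 = 2) (hL1 : L 1 = 1)
    (hrec : ∀ m : ℕ, L (m + 2) = L (m + 1) + L m)
    (n r : ℕ) (hn : 2 ≤ n) (hgcd : Nat.gcd n r = 1) :
    (gCirc n r (fun m => L (m + 1))).det =
      (Qg n r).det *
        ((1 - L (n + 1)) ^ (n - 1) +
          (L n - 2) ^ (n - 2) *
            ∑ i ∈ Finset.Icc 1 (n - 1),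
              (L (i + 2) - 3 * L (i + 1)) *
                ((1 - L (n + 1)) / (L n - 2)) ^ (i - 1)) :=
  det_gCirc_lucas_general L hL0 hL1 hrec n r hn
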